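/- arXiv:2512.12582 — 2 statements merged into one kernel-verified Lean document; each statement's English description precedes it below -/
import Mathlib

section
/- (Proposition 1, aligned-preferences case.) Assume d_A ≠ 0, d_B ≠ 0, and d_A·d_B > 0; set κ = d_A/d_B > 0, and for α_B ∈ [0,1) let α_A*(α_B) denote the unique minimizer of L_A(·, α_B) on [0,1). Then: (i) if d_A² ≤ p, then α_A*(α_B) = 0 for every α_B; (ii) if d_A²·(1 − 1/(2κ)) ≥ p and d_A² − λ(α_B)d_A d_B/2 > p, then α_A*(α_B) is the unique solution in (0,1) of f_A(α) = h_A(α_B); (iii) if d_A²·(1 − 1/(2κ)) < p < d_A², then α_A*(α_B) = 0 when λ(α_B) ≥ (2d_A² − 2p)/(d_A d_B), and α_A*(α_B) is the unique solution in (0,1) of f_A(α) = h_A(α_B) when λ(α_B) < (2d_A² − 2p)/(d_A d_B). -/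
open Set Filter

/-- Team decision formed by the two digital representatives. -/
noncomputable def teamDec (lam : ℝ → ℝ) (thA thB mu : ℝ) (aA aB : ℝ) : ℝ :=
  (lam aA * thA + (1 - lam aA) * mu + lam aB * thB + (1 - lam aB) * mu) / 2

/-- Alice's total loss: preference loss plus communication cost. -/
noncomputable def lossA (lam c : ℝ → ℝ) (thA thB mu : ℝ) (aA aB : ℝ) : ℝ :=
  (thA - teamDec lam thA thB mu aA aB) ^ 2 + c aA

/-- Bob's total loss: preference loss plus communication cost. -/
noncomputable def lossB (lam c : ℝ → ℝ) (thA thB mu : ℝ) (aA aB : ℝ) : ℝ :=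
  (thB - teamDec lam thA thB mu aA aB) ^ 2 + c aB

/-- The function `f_m(α) = λ(α) + (2/d_m²)·c'(α)/λ'(α)`. -/
noncomputable def fFun (lam lam' c' : ℝ → ℝ) (d : ℝ) (α : ℝ) : ℝ :=
  lam α + (2 / d ^ 2) * (c' α / lam' α)

/-- The function `h_m(α) = 2 − λ(α)·d_{−m}/d_m`. -/
noncomputable def hFun (lam : ℝ → ℝ) (dm dOther : ℝ) (α : ℝ) : ℝ :=
  2 - lam α * dOther / dm

/-- `a` is a best response of Alice to Bob's revelation `aB`:
it minimizes `α ↦ L_A(α, aB)` over `[0,1)`. -/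
def IsBestRespA (lam c : ℝ → ℝ) (thA thB mu : ℝ) (a aB : ℝ) : Prop :=
  a ∈ Set.Ico (0:ℝ) 1 ∧
    ∀ x ∈ Set.Ico (0:ℝ) 1, lossA lam c thA thB mu a aB ≤ lossA lam c thA thB mu x aB

/-- Nash equilibrium of the digital representative game. -/
def IsNashEq (lam c : ℝ → ℝ) (thA thB mu : ℝ) (aA aB : ℝ) : Prop :=
  aA ∈ Set.Ico (0:ℝ) 1 ∧ aB ∈ Set.Ico (0:ℝ) 1 ∧
  (∀ α ∈ Set.Ico (0:ℝ) 1, lossA lam c thA thB mu aA aB ≤ lossA lam c thA thB mu α aB) ∧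
  (∀ α ∈ Set.Ico (0:ℝ) 1, lossB lam c thA thB mu aA aB ≤ lossB lam c thA thB mu aA α)


/-! With `K = λ(α_B)·d_B`, the derivative of `L_A(·, α_B)` is
`c'(α) − λ'(α)·d_A·(d_A − (λ(α)·d_A + K)/2)`. Because `λ` is increasing and concave and `c'` is
nonnegative and strictly increasing, this derivative crosses zero at most once, and only upwards.
So the best response is `0` exactly when the derivative at `0`, which equals
`λ'(0)·(p − d_A² + λ(α_B)·d_A·d_B/2)`, is nonnegative; otherwise it is the unique interior zero of
the derivative, i.e. the root of `f_A = h_A`. With aligned preferences the term `λ(α_B)·d_A·d_B`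
is nonnegative, which yields the three regimes. -/

section CrossingDerivative

variable {G φ : ℝ → ℝ} {l u a : ℝ}

theorem strictMonoOn_Ico_of_crossing (hG : ∀ x ∈ Ico l u, HasDerivAt G (φ x) x)
    (hφ : ∀ x ∈ Ico l u, ∀ y ∈ Ico l u, x < y → 0 ≤ φ x → 0 < φ y) (h0 : 0 ≤ φ l) :
    StrictMonoOn G (Ico l u) := by
  refine strictMonoOn_of_hasDerivWithinAt_pos (f' := φ) (convex_Ico l u)
    (fun x hx => (hG x hx).continuousAt.continuousWithinAt) (fun x hx => ?_) (fun x hx => ?_)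
  · rw [interior_Ico] at hx ⊢
    exact (hG x (Ioo_subset_Ico_self hx)).hasDerivWithinAt
  · rw [interior_Ico] at hx
    exact hφ l ⟨le_rfl, hx.1.trans hx.2⟩ x (Ioo_subset_Ico_self hx) hx.1 h0

theorem eq_left_of_isMinOn_Ico (hG : ∀ x ∈ Ico l u, HasDerivAt G (φ x) x)
    (hφ : ∀ x ∈ Ico l u, ∀ y ∈ Ico l u, x < y → 0 ≤ φ x → 0 < φ y) (h0 : 0 ≤ φ l)
    (ha : a ∈ Ico l u) (hmin : IsMinOn G (Ico l u) a) : a = l := by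
  by_contra hne
  have hla : l < a := lt_of_le_of_ne ha.1 (Ne.symm hne)
  have := strictMonoOn_Ico_of_crossing hG hφ h0 ⟨le_rfl, hla.trans ha.2⟩ ha hla
  exact (hmin ⟨le_rfl, hla.trans ha.2⟩).not_gt this

theorem left_lt_of_isMinOn_Ico (hG : HasDerivAt G (φ l) l) (h0 : φ l < 0)
    (ha : a ∈ Ico l u) (hmin : IsMinOn G (Ico l u) a) : l < a := by
  refine lt_of_le_of_ne ha.1 fun hla => ?_
  subst hla
  obtain ⟨v, hlv, hvu⟩ := exists_between ha.2
  have hv : segment ℝ l v ⊆ Ico l u := by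
    rw [segment_eq_Icc hlv.le]
    exact Icc_subset_Ico_right hvu
  -- a one-sided minimum at `l` forces a nonnegative derivative in the direction of `v - l > 0`
  have := hmin.localize.hasFDerivWithinAt_nonneg hG.hasDerivWithinAt.hasFDerivWithinAt
    (sub_mem_posTangentConeAt_of_segment_subset hv)
  rw [ContinuousLinearMap.toSpanSingleton_apply, smul_eq_mul] at this
  nlinarith

theorem eq_of_crossing_of_eq_zero
    (hφ : ∀ x ∈ Ico l u, ∀ y ∈ Ico l u, x < y → 0 ≤ φ x → 0 < φ y) {x y : ℝ}
    (hx : x ∈ Ico l u) (hy : y ∈ Ico l u) (hφx : φ x = 0) (hφy : φ y = 0) : x = y := by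
  rcases lt_trichotomy x y with hxy | hxy | hxy
  · exact absurd hφy (hφ x hx y hy hxy hφx.ge).ne'
  · exact hxy
  · exact absurd hφx (hφ y hy x hx hxy hφy.ge).ne'

theorem isMinOn_Ico_unique_zero_of_left_deriv_neg (hG : ∀ x ∈ Ico l u, HasDerivAt G (φ x) x)
    (hφ : ∀ x ∈ Ico l u, ∀ y ∈ Ico l u, x < y → 0 ≤ φ x → 0 < φ y) (h0 : φ l < 0)
    (ha : a ∈ Ico l u) (hmin : IsMinOn G (Ico l u) a) :
    a ∈ Ioo l u ∧ φ a = 0 ∧ ∀ x ∈ Ioo l u, φ x = 0 → x = a := by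
  have hl : l ∈ Ico l u := ⟨le_rfl, ha.1.trans_lt ha.2⟩
  have haI : a ∈ Ioo l u := ⟨left_lt_of_isMinOn_Ico (hG l hl) h0 ha hmin, ha.2⟩
  have hφa : φ a = 0 :=
    (hmin.isLocalMin (Ico_mem_nhds haI.1 haI.2)).hasDerivAt_eq_zero (hG a ha)
  exact ⟨haI, hφa, fun x hx hφx =>
    eq_of_crossing_of_eq_zero hφ (Ioo_subset_Ico_self hx) ha hφx hφa⟩

end CrossingDerivative

/-- `∂L_A/∂α_A`, written with `lamB = λ(α_B)`. -/
noncomputable def marginalLossA (lam lam' c' : ℝ → ℝ) (dA dB lamB x : ℝ) : ℝ :=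
  c' x - lam' x * (dA * (dA - (lam x * dA + lamB * dB) / 2))

theorem lossA_eq (lam c : ℝ → ℝ) (thA thB muG x aB : ℝ) :
    lossA lam c thA thB muG x aB =
      (thA - muG - (lam x * (thA - muG) + lam aB * (thB - muG)) / 2) ^ 2 + c x := by
  simp only [lossA, teamDec]
  ring

theorem hasDerivAt_lossA {lam lam' c c' : ℝ → ℝ} {x : ℝ} (hlam : HasDerivAt lam (lam' x) x)
    (hc : HasDerivAt c (c' x) x) (thA thB muG aB : ℝ) :
    HasDerivAt (fun t => lossA lam c thA thB muG t aB)
      (marginalLossA lam lam' c' (thA - muG) (thB - muG) (lam aB) x) x := by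
  simp only [lossA_eq]
  have hgap := (((hlam.mul_const (thA - muG)).add_const (lam aB * (thB - muG))).div_const
    2).const_sub (thA - muG)
  refine ((hgap.fun_pow 2).fun_add hc).congr_deriv ?_
  simp only [marginalLossA]
  ring

theorem marginalLossA_pos_of_nonneg {lam lam' c' : ℝ → ℝ} {dA dB lamB x y : ℝ}
    (hlam : lam x ≤ lam y) (hlam'y : 0 ≤ lam' y) (hlam' : lam' y ≤ lam' x) (hc'x : 0 ≤ c' x)
    (hc' : c' x < c' y) (hx : 0 ≤ marginalLossA lam lam' c' dA dB lamB x) :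
    0 < marginalLossA lam lam' c' dA dB lamB y := by
  unfold marginalLossA at hx ⊢
  have hgain : dA * (dA - (lam y * dA + lamB * dB) / 2) ≤
      dA * (dA - (lam x * dA + lamB * dB) / 2) := by
    nlinarith [mul_le_mul_of_nonneg_left hlam (sq_nonneg dA)]
  generalize dA * (dA - (lam y * dA + lamB * dB) / 2) = gainy at hgain ⊢
  generalize dA * (dA - (lam x * dA + lamB * dB) / 2) = gainx at hgain hx
  rcases le_or_gt gainy 0 with hy | hy
  · nlinarith [mul_nonpos_of_nonneg_of_nonpos hlam'y hy]
  · nlinarith [mul_le_mul_of_nonneg_right hlam' hy.le,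
      mul_le_mul_of_nonneg_left hgain (hlam'y.trans hlam')]

theorem fFun_eq_hFun_iff {lam lam' c' : ℝ → ℝ} {dA dB aB x : ℝ} (hdA : dA ≠ 0)
    (hlam' : lam' x ≠ 0) :
    fFun lam lam' c' dA x = hFun lam dA dB aB ↔ marginalLossA lam lam' c' dA dB (lam aB) x = 0 := by
  have h : marginalLossA lam lam' c' dA dB (lam aB) x =
      dA ^ 2 * lam' x / 2 * (fFun lam lam' c' dA x - hFun lam dA dB aB) := by
    simp only [marginalLossA, fFun, hFun]
    field_simp
    ring
  rw [h, mul_eq_zero, sub_eq_zero, or_iff_right (by positivity)]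

theorem marginalLossA_zero_nonneg_iff {lam lam' c' : ℝ → ℝ} {dA dB lamB : ℝ} (hlam0 : lam 0 = 0)
    (hlam'0 : 0 < lam' 0) :
    0 ≤ marginalLossA lam lam' c' dA dB lamB 0 ↔ dA ^ 2 - lamB * dA * dB / 2 ≤ c' 0 / lam' 0 := by
  have h : marginalLossA lam lam' c' dA dB lamB 0 =
      c' 0 - (dA ^ 2 - lamB * dA * dB / 2) * lam' 0 := by
    simp only [marginalLossA, hlam0]
    ring
  rw [h, sub_nonneg, le_div_iff₀ hlam'0]

theorem marginalLossA_crossing {lam lam' c' : ℝ → ℝ} (dA dB lamB : ℝ)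
    (hlam : MonotoneOn lam (Icc 0 1)) (hlam'nonneg : ∀ α ∈ Icc (0:ℝ) 1, 0 ≤ lam' α)
    (hlam'anti : ∀ x ∈ Icc (0:ℝ) 1, ∀ y ∈ Icc (0:ℝ) 1, x ≤ y → lam' y ≤ lam' x)
    (hc'nonneg : ∀ α ∈ Ico (0:ℝ) 1, 0 ≤ c' α)
    (hc'strictMono : ∀ x ∈ Ico (0:ℝ) 1, ∀ y ∈ Ico (0:ℝ) 1, x < y → c' x < c' y) :
    ∀ x ∈ Ico (0:ℝ) 1, ∀ y ∈ Ico (0:ℝ) 1, x < y →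
      0 ≤ marginalLossA lam lam' c' dA dB lamB x → 0 < marginalLossA lam lam' c' dA dB lamB y :=
  fun x hx y hy hxy =>
    marginalLossA_pos_of_nonneg (hlam (Ico_subset_Icc_self hx) (Ico_subset_Icc_self hy) hxy.le)
      (hlam'nonneg y (Ico_subset_Icc_self hy))
      (hlam'anti x (Ico_subset_Icc_self hx) y (Ico_subset_Icc_self hy) hxy.le) (hc'nonneg x hx)
      (hc'strictMono x hx y hy hxy)

section BestResponse

variable {lam lam' c c' : ℝ → ℝ} {thA thB muG a aB : ℝ}

theorem IsBestRespA.eq_zero (hlamDeriv : ∀ α ∈ Icc (0:ℝ) 1, HasDerivAt lam (lam' α) α)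
    (hlam0 : lam 0 = 0) (hlam : MonotoneOn lam (Icc 0 1))
    (hlam'pos : ∀ α ∈ Icc (0:ℝ) 1, 0 < lam' α)
    (hlam'anti : ∀ x ∈ Icc (0:ℝ) 1, ∀ y ∈ Icc (0:ℝ) 1, x ≤ y → lam' y ≤ lam' x)
    (hcDeriv : ∀ α ∈ Ico (0:ℝ) 1, HasDerivAt c (c' α) α)
    (hc'nonneg : ∀ α ∈ Ico (0:ℝ) 1, 0 ≤ c' α)
    (hc'strictMono : ∀ x ∈ Ico (0:ℝ) 1, ∀ y ∈ Ico (0:ℝ) 1, x < y → c' x < c' y)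
    (hbr : IsBestRespA lam c thA thB muG a aB)
    (hle : (thA - muG) ^ 2 - lam aB * (thA - muG) * (thB - muG) / 2 ≤ c' 0 / lam' 0) :
    a = 0 :=
  eq_left_of_isMinOn_Ico
    (fun x hx => hasDerivAt_lossA (hlamDeriv x (Ico_subset_Icc_self hx)) (hcDeriv x hx) _ _ _ _)
    (marginalLossA_crossing _ _ _ hlam (fun α hα => (hlam'pos α hα).le) hlam'anti hc'nonneg
      hc'strictMono)
    ((marginalLossA_zero_nonneg_iff hlam0 (hlam'pos 0 (left_mem_Icc.mpr zero_le_one))).mpr hle)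
    hbr.1 (isMinOn_iff.mpr hbr.2)

theorem IsBestRespA.solves_fFun_eq_hFun
    (hlamDeriv : ∀ α ∈ Icc (0:ℝ) 1, HasDerivAt lam (lam' α) α)
    (hlam0 : lam 0 = 0) (hlam : MonotoneOn lam (Icc 0 1))
    (hlam'pos : ∀ α ∈ Icc (0:ℝ) 1, 0 < lam' α)
    (hlam'anti : ∀ x ∈ Icc (0:ℝ) 1, ∀ y ∈ Icc (0:ℝ) 1, x ≤ y → lam' y ≤ lam' x)
    (hcDeriv : ∀ α ∈ Ico (0:ℝ) 1, HasDerivAt c (c' α) α)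
    (hc'nonneg : ∀ α ∈ Ico (0:ℝ) 1, 0 ≤ c' α)
    (hc'strictMono : ∀ x ∈ Ico (0:ℝ) 1, ∀ y ∈ Ico (0:ℝ) 1, x < y → c' x < c' y)
    (hdA : thA - muG ≠ 0) (hbr : IsBestRespA lam c thA thB muG a aB)
    (hlt : c' 0 / lam' 0 < (thA - muG) ^ 2 - lam aB * (thA - muG) * (thB - muG) / 2) :
    a ∈ Ioo (0:ℝ) 1 ∧ fFun lam lam' c' (thA - muG) a = hFun lam (thA - muG) (thB - muG) aB ∧
      ∀ x ∈ Ioo (0:ℝ) 1,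
        fFun lam lam' c' (thA - muG) x = hFun lam (thA - muG) (thB - muG) aB → x = a := by
  have hneg : marginalLossA lam lam' c' (thA - muG) (thB - muG) (lam aB) 0 < 0 := by
    rw [← not_le, marginalLossA_zero_nonneg_iff hlam0 (hlam'pos 0 (left_mem_Icc.mpr zero_le_one))]
    exact hlt.not_ge
  obtain ⟨haI, hzero, huniq⟩ := isMinOn_Ico_unique_zero_of_left_deriv_neg
    (fun x hx => hasDerivAt_lossA (hlamDeriv x (Ico_subset_Icc_self hx)) (hcDeriv x hx) _ _ _ _)
    (marginalLossA_crossing _ _ _ hlam (fun α hα => (hlam'pos α hα).le) hlam'anti hc'nonneg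
      hc'strictMono) hneg hbr.1 (isMinOn_iff.mpr hbr.2)
  have hlam'ne : ∀ x ∈ Ioo (0:ℝ) 1, lam' x ≠ 0 := fun x hx =>
    (hlam'pos x (Ioo_subset_Icc_self hx)).ne'
  exact ⟨haI, (fFun_eq_hFun_iff hdA (hlam'ne a haI)).mpr hzero,
    fun x hx hfx => huniq x hx ((fFun_eq_hFun_iff hdA (hlam'ne x hx)).mp hfx)⟩

end BestResponse

theorem bestRespA_aligned_general
    (lam lam' c c' : ℝ → ℝ)
    (hlamDeriv : ∀ α ∈ Set.Icc (0:ℝ) 1, HasDerivAt lam (lam' α) α)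
    (hlam0 : lam 0 = 0)
    (hlam'pos : ∀ α ∈ Set.Icc (0:ℝ) 1, 0 < lam' α)
    (hlam'anti : ∀ x ∈ Set.Icc (0:ℝ) 1, ∀ y ∈ Set.Icc (0:ℝ) 1, x ≤ y → lam' y ≤ lam' x)
    (hcDeriv : ∀ α ∈ Set.Ico (0:ℝ) 1, HasDerivAt c (c' α) α)
    (hc'nonneg : ∀ α ∈ Set.Ico (0:ℝ) 1, 0 ≤ c' α)
    (hc'strictMono : ∀ x ∈ Set.Ico (0:ℝ) 1, ∀ y ∈ Set.Ico (0:ℝ) 1, x < y → c' x < c' y)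
    (thA thB muG dA dB : ℝ)
    (hdA : dA = thA - muG) (hdB : dB = thB - muG)
    (hdAne : dA ≠ 0) (halign : dA * dB > 0) :
    -- (i) if `d_A² ≤ p`, Alice never reveals
    ((dA ^ 2 ≤ c' 0 / lam' 0 →
        ∀ aB ∈ Set.Ico (0:ℝ) 1, ∀ a, IsBestRespA lam c thA thB muG a aB → a = 0)) ∧
    -- (ii) if `d_A²(1 − 1/(2κ)) ≥ p` and `d_A² − λ(α_B)d_Ad_B/2 > p`, the best response is the
    -- unique interior solution of `f_A(α) = h_A(α_B)`
    ((dA ^ 2 * (1 - 1 / (2 * (dA / dB))) ≥ c' 0 / lam' 0 →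
        ∀ aB ∈ Set.Ico (0:ℝ) 1, dA ^ 2 - lam aB * dA * dB / 2 > c' 0 / lam' 0 →
          ∀ a, IsBestRespA lam c thA thB muG a aB →
            a ∈ Set.Ioo (0:ℝ) 1 ∧
            fFun lam lam' c' dA a = hFun lam dA dB aB ∧
            ∀ x ∈ Set.Ioo (0:ℝ) 1, fFun lam lam' c' dA x = hFun lam dA dB aB → x = a)) ∧
    -- (iii) intermediate trigger price: threshold behavior in `λ(α_B)`
    ((dA ^ 2 * (1 - 1 / (2 * (dA / dB))) < c' 0 / lam' 0 ∧ c' 0 / lam' 0 < dA ^ 2 →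
        ∀ aB ∈ Set.Ico (0:ℝ) 1, ∀ a, IsBestRespA lam c thA thB muG a aB →
          ((lam aB ≥ (2 * dA ^ 2 - 2 * (c' 0 / lam' 0)) / (dA * dB) → a = 0) ∧
           (lam aB < (2 * dA ^ 2 - 2 * (c' 0 / lam' 0)) / (dA * dB) →
             a ∈ Set.Ioo (0:ℝ) 1 ∧
             fFun lam lam' c' dA a = hFun lam dA dB aB ∧
             ∀ x ∈ Set.Ioo (0:ℝ) 1, fFun lam lam' c' dA x = hFun lam dA dB aB → x = a)))) := by
  subst hdA hdB
  have hlam : MonotoneOn lam (Icc 0 1) :=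
    monotoneOn_of_hasDerivWithinAt_nonneg (convex_Icc 0 1)
      (fun x hx => (hlamDeriv x hx).continuousAt.continuousWithinAt)
      (fun x hx => (hlamDeriv x (interior_subset hx)).hasDerivWithinAt)
      (fun x hx => (hlam'pos x (interior_subset hx)).le)
  have eq_zero {a aB : ℝ} (hbr : IsBestRespA lam c thA thB muG a aB) :=
    hbr.eq_zero hlamDeriv hlam0 hlam hlam'pos hlam'anti hcDeriv hc'nonneg hc'strictMono
  have solves {a aB : ℝ} (hbr : IsBestRespA lam c thA thB muG a aB) :=
    hbr.solves_fFun_eq_hFun hlamDeriv hlam0 hlam hlam'pos hlam'anti hcDeriv hc'nonneg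
      hc'strictMono hdAne
  refine ⟨fun hp aB haB a hbr => eq_zero hbr ?_, fun _ aB _ hlt a hbr => solves hbr hlt,
    fun _ aB _ a hbr => ⟨fun hge => eq_zero hbr ?_, fun hlt => solves hbr ?_⟩⟩
  · have hlamB : 0 ≤ lam aB :=
      hlam0 ▸ hlam (left_mem_Icc.mpr zero_le_one) (Ico_subset_Icc_self haB) haB.1
    nlinarith [mul_nonneg hlamB halign.le]
  · rw [ge_iff_le, div_le_iff₀ halign] at hge
    linarith
  · rw [lt_div_iff₀ halign] at hlt
    linarith

/-- Proposition 1, aligned preferences, `κ = d_A/d_B > 0`. -/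
theorem bestRespA_aligned
    (lam lam' c c' : ℝ → ℝ)
    (hlamDeriv : ∀ α ∈ Set.Icc (0:ℝ) 1, HasDerivAt lam (lam' α) α)
    (hlam'Cont : ContinuousOn lam' (Set.Icc (0:ℝ) 1))
    (hlam0 : lam 0 = 0) (hlam1 : lam 1 = 1)
    (hlam'pos : ∀ α ∈ Set.Icc (0:ℝ) 1, 0 < lam' α)
    (hlam'anti : ∀ x ∈ Set.Icc (0:ℝ) 1, ∀ y ∈ Set.Icc (0:ℝ) 1, x ≤ y → lam' y ≤ lam' x)
    (hcDeriv : ∀ α ∈ Set.Ico (0:ℝ) 1, HasDerivAt c (c' α) α)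
    (hc'Cont : ContinuousOn c' (Set.Ico (0:ℝ) 1))
    (hc0 : c 0 = 0)
    (hc'nonneg : ∀ α ∈ Set.Ico (0:ℝ) 1, 0 ≤ c' α)
    (hc'strictMono : ∀ x ∈ Set.Ico (0:ℝ) 1, ∀ y ∈ Set.Ico (0:ℝ) 1, x < y → c' x < c' y)
    (hc'top : Filter.Tendsto c' (nhdsWithin 1 (Set.Iio 1)) Filter.atTop)
    (thA thB muG dA dB : ℝ)
    (hdA : dA = thA - muG) (hdB : dB = thB - muG)
    (hdAne : dA ≠ 0) (hdBne : dB ≠ 0) (halign : dA * dB > 0) :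
    -- (i) if `d_A² ≤ p`, Alice never reveals
    ((dA ^ 2 ≤ c' 0 / lam' 0 →
        ∀ aB ∈ Set.Ico (0:ℝ) 1, ∀ a, IsBestRespA lam c thA thB muG a aB → a = 0)) ∧
    -- (ii) if `d_A²(1 − 1/(2κ)) ≥ p` and `d_A² − λ(α_B)d_Ad_B/2 > p`, the best response is the
    -- unique interior solution of `f_A(α) = h_A(α_B)`
    ((dA ^ 2 * (1 - 1 / (2 * (dA / dB))) ≥ c' 0 / lam' 0 →
        ∀ aB ∈ Set.Ico (0:ℝ) 1, dA ^ 2 - lam aB * dA * dB / 2 > c' 0 / lam' 0 →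
          ∀ a, IsBestRespA lam c thA thB muG a aB →
            a ∈ Set.Ioo (0:ℝ) 1 ∧
            fFun lam lam' c' dA a = hFun lam dA dB aB ∧
            ∀ x ∈ Set.Ioo (0:ℝ) 1, fFun lam lam' c' dA x = hFun lam dA dB aB → x = a)) ∧
    -- (iii) intermediate trigger price: threshold behavior in `λ(α_B)`
    ((dA ^ 2 * (1 - 1 / (2 * (dA / dB))) < c' 0 / lam' 0 ∧ c' 0 / lam' 0 < dA ^ 2 →
        ∀ aB ∈ Set.Ico (0:ℝ) 1, ∀ a, IsBestRespA lam c thA thB muG a aB →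
          ((lam aB ≥ (2 * dA ^ 2 - 2 * (c' 0 / lam' 0)) / (dA * dB) → a = 0) ∧
           (lam aB < (2 * dA ^ 2 - 2 * (c' 0 / lam' 0)) / (dA * dB) →
             a ∈ Set.Ioo (0:ℝ) 1 ∧
             fFun lam lam' c' dA a = hFun lam dA dB aB ∧
             ∀ x ∈ Set.Ioo (0:ℝ) 1, fFun lam lam' c' dA x = hFun lam dA dB aB → x = a)))) :=
  bestRespA_aligned_general lam lam' c c' hlamDeriv hlam0 hlam'pos hlam'anti hcDeriv hc'nonneg
    hc'strictMono thA thB muG dA dB hdA hdB hdAne halign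
end

section
/- (No full revelation.) Assume d_A ≠ 0 and d_B ≠ 0, and for α_B ∈ [0,1) let α_A*(α_B) denote the unique minimizer of L_A(·, α_B) on [0,1). Then sup over α_B ∈ [0,1) of α_A*(α_B) is strictly less than 1; in fact, if f_A(0) < 2 + |d_B/d_A| then α_A*(α_B) ≤ ᾱ for all α_B, where ᾱ ∈ (0,1) is the unique solution of f_A(ᾱ) = 2 + |d_B/d_A|, and otherwise α_A*(α_B) = 0 for all α_B. -/
/-!
A positive best response `a` of Alice is an interior minimiser of her loss, so the first-order
condition holds there; divided by `λ'(a) d_A² / 2` it reads `f_A(a) = 2 - λ(α_B) d_B / d_A`, and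
the right-hand side is at most `2 + |d_B / d_A|` because `0 ≤ λ(α_B) ≤ 1`. The function `f_A` is
strictly increasing on `[0,1)` (`λ` increases, `c'` increases, `λ'` decreases) and tends to `+∞`
at `1⁻` (because `c'` does), so the level `2 + |d_B / d_A|` is either below `f_A(0)`, which
forces every best response to be `0`, or attained at a unique `ᾱ ∈ (0,1)`, which then bounds
every best response.
-/

open Set Filter

open Topology

lemma strictMonoOn_of_hasDerivAt_pos {D : Set ℝ} (hD : Convex ℝ D) {f f' : ℝ → ℝ}
    (hf : ∀ x ∈ D, HasDerivAt f (f' x) x) (hf' : ∀ x ∈ D, 0 < f' x) : StrictMonoOn f D :=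
  strictMonoOn_of_hasDerivWithinAt_pos hD
    (fun x hx => (hf x hx).continuousAt.continuousWithinAt)
    (fun x hx => (hf x (interior_subset hx)).hasDerivWithinAt)
    (fun x hx => hf' x (interior_subset hx))

lemma sub_teamDec (lam : ℝ → ℝ) (thA thB mu aA aB : ℝ) :
    thA - teamDec lam thA thB mu aA aB =
      (thA - mu) - (lam aA * (thA - mu) + lam aB * (thB - mu)) / 2 := by
  unfold teamDec; ring

lemma hasDerivAt_teamDec_left {lam : ℝ → ℝ} {l : ℝ} {thA thB mu aA aB : ℝ}
    (hlam : HasDerivAt lam l aA) :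
    HasDerivAt (fun α => teamDec lam thA thB mu α aB) (l * (thA - mu) / 2) aA := by
  unfold teamDec
  refine (((((hlam.mul_const thA).add (((hasDerivAt_const aA 1).sub hlam).mul_const mu)).add_const
    (lam aB * thB)).add_const ((1 - lam aB) * mu)).div_const 2).congr_deriv ?_
  ring

lemma hasDerivAt_lossA_left {lam c : ℝ → ℝ} {l k : ℝ} {thA thB mu aA aB : ℝ}
    (hlam : HasDerivAt lam l aA) (hc : HasDerivAt c k aA) :
    HasDerivAt (fun α => lossA lam c thA thB mu α aB)
      (k - l * (thA - mu) * (thA - teamDec lam thA thB mu aA aB)) aA := by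
  unfold lossA
  refine ((((hasDerivAt_teamDec_left hlam).const_sub thA).pow 2).add hc).congr_deriv ?_
  ring

lemma IsBestRespA.fFun_eq_hFun {lam lam' c c' : ℝ → ℝ} {thA thB mu a aB : ℝ}
    (hbr : IsBestRespA lam c thA thB mu a aB) (ha : 0 < a)
    (hlam : HasDerivAt lam (lam' a) a) (hlam' : lam' a ≠ 0) (hc : HasDerivAt c (c' a) a)
    (hd : thA - mu ≠ 0) :
    fFun lam lam' c' (thA - mu) a = hFun lam (thA - mu) (thB - mu) aB := by
  have hmin : IsLocalMin (fun α => lossA lam c thA thB mu α aB) a :=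
    IsMinOn.isLocalMin hbr.2 (Ico_mem_nhds ha hbr.1.2)
  have hfoc := hmin.hasDerivAt_eq_zero (hasDerivAt_lossA_left hlam hc)
  rw [sub_teamDec] at hfoc
  unfold fFun hFun
  field_simp
  linear_combination 2 * hfoc

lemma hFun_le_two_add_abs {lam : ℝ → ℝ} {α : ℝ} (h0 : 0 ≤ lam α) (h1 : lam α ≤ 1)
    (dm dOther : ℝ) : hFun lam dm dOther α ≤ 2 + |dOther / dm| := by
  have h : -(lam α * (dOther / dm)) ≤ |dOther / dm| :=
    calc -(lam α * (dOther / dm)) ≤ |lam α * (dOther / dm)| := neg_le_abs _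
      _ = lam α * |dOther / dm| := by rw [abs_mul, abs_of_nonneg h0]
      _ ≤ |dOther / dm| := mul_le_of_le_one_left (abs_nonneg _) h1
  unfold hFun
  linarith [mul_div_assoc (lam α) dOther dm]

lemma fFun_strictMonoOn {lam lam' c' : ℝ → ℝ} {s : Set ℝ} (hlam : StrictMonoOn lam s)
    (hlam' : AntitoneOn lam' s) (hc' : MonotoneOn c' s) (hlam'pos : ∀ x ∈ s, 0 < lam' x)
    (hc'nonneg : ∀ x ∈ s, 0 ≤ c' x) (d : ℝ) : StrictMonoOn (fFun lam lam' c' d) s := by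
  intro x hx y hy hxy
  have hratio : c' x / lam' x ≤ c' y / lam' y :=
    div_le_div₀ (hc'nonneg y hy) (hc' hx hy hxy.le) (hlam'pos y hy) (hlam' hx hy hxy.le)
  unfold fFun
  exact add_lt_add_of_lt_of_le (hlam hx hy hxy) (by gcongr)

lemma fFun_continuousOn {lam lam' c' : ℝ → ℝ} {s : Set ℝ} (hlam : ContinuousOn lam s)
    (hlam' : ContinuousOn lam' s) (hc' : ContinuousOn c' s) (hne : ∀ x ∈ s, lam' x ≠ 0)
    (d : ℝ) : ContinuousOn (fFun lam lam' c' d) s :=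
  hlam.add (continuousOn_const.mul (hc'.div hlam' hne))

lemma tendsto_fFun_atTop {lam lam' c' : ℝ → ℝ} {l : Filter ℝ} {d M : ℝ} (hd : d ≠ 0)
    (hM : 0 < M) (hc' : Tendsto c' l atTop) (hlam : ∀ᶠ x in l, 0 ≤ lam x)
    (hlam' : ∀ᶠ x in l, 0 < lam' x ∧ lam' x ≤ M) :
    Tendsto (fFun lam lam' c' d) l atTop := by
  have hcoef : 0 < 2 / d ^ 2 := by positivity
  refine tendsto_atTop_mono' l ?_ ((hc'.atTop_div_const hM).const_mul_atTop hcoef)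
  filter_upwards [hlam, hlam', hc'.eventually_ge_atTop 0] with x h0 ⟨hpos, hle⟩ hc
  have hratio : c' x / M ≤ c' x / lam' x := div_le_div_of_nonneg_left hc hpos hle
  unfold fFun
  exact le_add_of_nonneg_of_le h0 (by gcongr)

lemma exists_mem_Ioo_eq_of_tendsto_atTop {f : ℝ → ℝ} {a b K : ℝ} (hab : a < b)
    (hf : ContinuousOn f (Ico a b)) (hlim : Tendsto f (𝓝[<] b) atTop) (ha : f a < K) :
    ∃ x ∈ Ioo a b, f x = K := by
  obtain ⟨x₀, hK, hx₀⟩ := ((hlim.eventually_gt_atTop K).and (Ioo_mem_nhdsLT hab)).exists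
  obtain ⟨x, hx, hfx⟩ := intermediate_value_Ioo hx₀.1.le
    (hf.mono (Icc_subset_Ico_right hx₀.2)) ⟨ha, hK⟩
  exact ⟨x, ⟨hx.1, hx.2.trans hx₀.2⟩, hfx⟩

lemma le_of_strictMonoOn_Ico {f : ℝ → ℝ} (hf : StrictMonoOn f (Ico 0 1)) {a b : ℝ}
    (ha : a ∈ Ico (0:ℝ) 1) (hb : b ∈ Ico (0:ℝ) 1) (hab : 0 < a → f a ≤ f b) : a ≤ b := by
  rcases ha.1.eq_or_lt with rfl | hpos
  · exact hb.1
  · exact (hf.le_iff_le ha hb).1 (hab hpos)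

lemma eq_zero_of_strictMonoOn_Ico {f : ℝ → ℝ} (hf : StrictMonoOn f (Ico 0 1)) {a : ℝ}
    (ha : a ∈ Ico (0:ℝ) 1) (h : 0 < a → f a ≤ f 0) : a = 0 :=
  le_antisymm (le_of_strictMonoOn_Ico hf ha ⟨le_rfl, zero_lt_one⟩ h) ha.1

theorem bestRespA_no_full_revelation_general
    (lam lam' c c' : ℝ → ℝ)
    (hlamDeriv : ∀ α ∈ Set.Icc (0:ℝ) 1, HasDerivAt lam (lam' α) α)
    (hlam'Cont : ContinuousOn lam' (Set.Icc (0:ℝ) 1))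
    (hlam0 : lam 0 = 0) (hlam1 : lam 1 = 1)
    (hlam'pos : ∀ α ∈ Set.Icc (0:ℝ) 1, 0 < lam' α)
    (hlam'anti : ∀ x ∈ Set.Icc (0:ℝ) 1, ∀ y ∈ Set.Icc (0:ℝ) 1, x ≤ y → lam' y ≤ lam' x)
    (hcDeriv : ∀ α ∈ Set.Ico (0:ℝ) 1, HasDerivAt c (c' α) α)
    (hc'Cont : ContinuousOn c' (Set.Ico (0:ℝ) 1))
    (hc'nonneg : ∀ α ∈ Set.Ico (0:ℝ) 1, 0 ≤ c' α)
    (hc'strictMono : ∀ x ∈ Set.Ico (0:ℝ) 1, ∀ y ∈ Set.Ico (0:ℝ) 1, x < y → c' x < c' y)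
    (hc'top : Filter.Tendsto c' (nhdsWithin 1 (Set.Iio 1)) Filter.atTop)
    (thA thB muG dA dB : ℝ)
    (hdA : dA = thA - muG) (hdB : dB = thB - muG)
    (hdAne : dA ≠ 0) :
    (∃ u < (1:ℝ), ∀ aB ∈ Set.Ico (0:ℝ) 1, ∀ a, IsBestRespA lam c thA thB muG a aB → a ≤ u) ∧
    (fFun lam lam' c' dA 0 < 2 + |dB / dA| →
      (∃! ab, ab ∈ Set.Ioo (0:ℝ) 1 ∧ fFun lam lam' c' dA ab = 2 + |dB / dA|) ∧
      ∀ ab, ab ∈ Set.Ioo (0:ℝ) 1 ∧ fFun lam lam' c' dA ab = 2 + |dB / dA| →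
        ∀ aB ∈ Set.Ico (0:ℝ) 1, ∀ a, IsBestRespA lam c thA thB muG a aB → a ≤ ab) ∧
    (2 + |dB / dA| ≤ fFun lam lam' c' dA 0 →
      ∀ aB ∈ Set.Ico (0:ℝ) 1, ∀ a, IsBestRespA lam c thA thB muG a aB → a = 0) := by
  subst hdA hdB
  set f := fFun lam lam' c' (thA - muG)
  set K := 2 + |(thB - muG) / (thA - muG)|
  have hIco : Ico (0:ℝ) 1 ⊆ Icc 0 1 := Ico_subset_Icc_self
  have hlamMono : StrictMonoOn lam (Icc 0 1) :=
    strictMonoOn_of_hasDerivAt_pos (convex_Icc 0 1) hlamDeriv hlam'pos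
  have hlamIcc : ∀ x ∈ Ico (0:ℝ) 1, 0 ≤ lam x ∧ lam x ≤ 1 := fun x hx =>
    ⟨hlam0 ▸ hlamMono.monotoneOn ⟨le_rfl, zero_le_one⟩ (hIco hx) hx.1,
     hlam1 ▸ hlamMono.monotoneOn (hIco hx) ⟨zero_le_one, le_rfl⟩ hx.2.le⟩
  have hfMono : StrictMonoOn f (Ico 0 1) :=
    fFun_strictMonoOn (hlamMono.mono hIco) (fun x hx y hy => hlam'anti x (hIco hx) y (hIco hy))
      (StrictMonoOn.monotoneOn fun x hx y hy => hc'strictMono x hx y hy)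
      (fun x hx => hlam'pos x (hIco hx)) hc'nonneg _
  have hbr : ∀ aB ∈ Ico (0:ℝ) 1, ∀ a, IsBestRespA lam c thA thB muG a aB → 0 < a → f a ≤ K :=
    fun aB haB a h ha => (h.fFun_eq_hFun ha (hlamDeriv a (hIco h.1))
      (hlam'pos a (hIco h.1)).ne' (hcDeriv a h.1) hdAne).trans_le
      (hFun_le_two_add_abs (hlamIcc aB haB).1 (hlamIcc aB haB).2 _ _)
  have hbound : ∀ ab ∈ Ioo (0:ℝ) 1, f ab = K →
      ∀ aB ∈ Ico (0:ℝ) 1, ∀ a, IsBestRespA lam c thA thB muG a aB → a ≤ ab :=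
    fun ab hab hfab aB haB a h => le_of_strictMonoOn_Ico hfMono h.1 (Ioo_subset_Ico_self hab)
      fun ha => hfab ▸ hbr aB haB a h ha
  have hzero : K ≤ f 0 →
      ∀ aB ∈ Ico (0:ℝ) 1, ∀ a, IsBestRespA lam c thA thB muG a aB → a = 0 :=
    fun hK aB haB a h =>
      eq_zero_of_strictMonoOn_Ico hfMono h.1 fun ha => (hbr aB haB a h ha).trans hK
  have hexists : f 0 < K → ∃ ab ∈ Ioo (0:ℝ) 1, f ab = K :=
    exists_mem_Ioo_eq_of_tendsto_atTop zero_lt_one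
      (fFun_continuousOn (fun x hx => (hlamDeriv x (hIco hx)).continuousAt.continuousWithinAt)
        (hlam'Cont.mono hIco) hc'Cont
        (fun x hx => (hlam'pos x (hIco hx)).ne') _)
      (tendsto_fFun_atTop hdAne (hlam'pos 0 ⟨le_rfl, zero_le_one⟩) hc'top
        (eventually_of_mem (Ico_mem_nhdsLT zero_lt_one) fun x hx => (hlamIcc x hx).1)
        (eventually_of_mem (Ico_mem_nhdsLT zero_lt_one) fun x hx =>
          ⟨hlam'pos x (hIco hx), hlam'anti 0 ⟨le_rfl, zero_le_one⟩ x (hIco hx) hx.1⟩))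
  refine ⟨?_, fun h0 => ⟨?_, fun ab hab => hbound ab hab.1 hab.2⟩, hzero⟩
  · by_cases h0 : f 0 < K
    · obtain ⟨ab, hab, hfab⟩ := hexists h0
      exact ⟨ab, hab.2, hbound ab hab hfab⟩
    · exact ⟨0, zero_lt_one, fun aB haB a h => (hzero (not_lt.1 h0) aB haB a h).le⟩
  · obtain ⟨ab, hab, hfab⟩ := hexists h0
    exact ⟨ab, ⟨hab, hfab⟩, fun y hy => hfMono.injOn (Ioo_subset_Ico_self hy.1)
      (Ioo_subset_Ico_self hab) (hy.2.trans hfab.symm)⟩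

/-- No full revelation. The supremum of Alice's best responses over all
`α_B ∈ [0,1)` is strictly less than `1`; in fact her best responses are bounded by the unique
interior solution of `f_A(ᾱ) = 2 + |d_B/d_A|` when `f_A(0) < 2 + |d_B/d_A|`, and are `0`
otherwise. -/
theorem bestRespA_no_full_revelation
    (lam lam' c c' : ℝ → ℝ)
    (hlamDeriv : ∀ α ∈ Set.Icc (0:ℝ) 1, HasDerivAt lam (lam' α) α)
    (hlam'Cont : ContinuousOn lam' (Set.Icc (0:ℝ) 1))
    (hlam0 : lam 0 = 0) (hlam1 : lam 1 = 1)
    (hlam'pos : ∀ α ∈ Set.Icc (0:ℝ) 1, 0 < lam' α)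
    (hlam'anti : ∀ x ∈ Set.Icc (0:ℝ) 1, ∀ y ∈ Set.Icc (0:ℝ) 1, x ≤ y → lam' y ≤ lam' x)
    (hcDeriv : ∀ α ∈ Set.Ico (0:ℝ) 1, HasDerivAt c (c' α) α)
    (hc'Cont : ContinuousOn c' (Set.Ico (0:ℝ) 1))
    (hc0 : c 0 = 0)
    (hc'nonneg : ∀ α ∈ Set.Ico (0:ℝ) 1, 0 ≤ c' α)
    (hc'strictMono : ∀ x ∈ Set.Ico (0:ℝ) 1, ∀ y ∈ Set.Ico (0:ℝ) 1, x < y → c' x < c' y)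
    (hc'top : Filter.Tendsto c' (nhdsWithin 1 (Set.Iio 1)) Filter.atTop)
    (thA thB muG dA dB : ℝ)
    (hdA : dA = thA - muG) (hdB : dB = thB - muG)
    (hdAne : dA ≠ 0) (hdBne : dB ≠ 0) :
    (∃ u < (1:ℝ), ∀ aB ∈ Set.Ico (0:ℝ) 1, ∀ a, IsBestRespA lam c thA thB muG a aB → a ≤ u) ∧
    (fFun lam lam' c' dA 0 < 2 + |dB / dA| →
      (∃! ab, ab ∈ Set.Ioo (0:ℝ) 1 ∧ fFun lam lam' c' dA ab = 2 + |dB / dA|) ∧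
      ∀ ab, ab ∈ Set.Ioo (0:ℝ) 1 ∧ fFun lam lam' c' dA ab = 2 + |dB / dA| →
        ∀ aB ∈ Set.Ico (0:ℝ) 1, ∀ a, IsBestRespA lam c thA thB muG a aB → a ≤ ab) ∧
    (2 + |dB / dA| ≤ fFun lam lam' c' dA 0 →
      ∀ aB ∈ Set.Ico (0:ℝ) 1, ∀ a, IsBestRespA lam c thA thB muG a aB → a = 0) :=
  bestRespA_no_full_revelation_general lam lam' c c' hlamDeriv hlam'Cont hlam0 hlam1 hlam'pos
    hlam'anti hcDeriv hc'Cont hc'nonneg hc'strictMono hc'top thA thB muG dA dB hdA hdB hdAne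
end
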